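/- arXiv:2604.06087 — 2 statements merged into one kernel-verified Lean document; each statement's English description precedes it below -/
import Mathlib

section
/- For every χ : L → Ĝ and every q : V → Ĝ, the unitary Wilson line operator W^χ maps the charge sector H_q bijectively onto the charge sector H_{q · ∂χ}, where q · ∂χ denotes the pointwise product v ↦ (q v) * ((∂ χ) v). (This is the statement that dressing frame fields built from Wilson lines are isometries between the perspective-neutral space and the Gauss-law-violating charge sectors.) -/
open Finset

variable {V L : Type*} [Fintype V] [Fintype L] [DecidableEq V]
variable {G : Type*} [CommGroup G] [Fintype G]

/-- The gauge transformation `U^g` on the kinematical Hilbert space `(L → G) → ℂ`. -/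
def Ugauge (s t : L → V) (g : V → G) : ((L → G) → ℂ) → ((L → G) → ℂ) :=
  fun f a => f fun ℓ => (g (s ℓ))⁻¹ * a ℓ * g (t ℓ)

/-- The Wilson line (multiplication) operator `W^χ` for a family of characters `χ`. -/
def Wline (χ : L → (G →* ℂˣ)) : ((L → G) → ℂ) → ((L → G) → ℂ) :=
  fun f a => (((∏ ℓ, χ ℓ (a ℓ))⁻¹ : ℂˣ) : ℂ) • f a

/-- The Gauss law map `∂`, assigning to link character data the vertex charge it excites. -/
def gaussMap (s t : L → V) (χ : L → (G →* ℂˣ)) : V → (G →* ℂˣ) :=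
  fun v => (∏ ℓ ∈ univ.filter fun ℓ => s ℓ = v, χ ℓ) *
    ∏ ℓ ∈ univ.filter fun ℓ => t ℓ = v, (χ ℓ)⁻¹

/-- The charge sector `H_q` for a vertex charge configuration `q`. -/
def chargeSector (s t : L → V) (q : V → (G →* ℂˣ)) : Set ((L → G) → ℂ) :=
  {f | ∀ g : V → G, Ugauge s t g f = (((∏ v, q v (g v)) : ℂˣ) : ℂ) • f}
/-
A gauge transformation conjugates a Wilson line into itself times the scalar
`∏ v, (∂χ) v (g v)`: each character `χ ℓ` evaluated at `(g (s ℓ))⁻¹ * a ℓ * g (t ℓ)` splits off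
the factor `(χ ℓ (g (s ℓ)))⁻¹ * χ ℓ (g (t ℓ))`, and regrouping these factors by vertex gives `∂χ`.
Hence `W^χ` maps `H_q` into `H_{q · ∂χ}`, and its inverse `W^{χ⁻¹}` maps `H_{q · ∂χ}` back into
`H_{q · ∂χ · ∂(χ⁻¹)} = H_q`.
-/

lemma prod_fiberwise_filter_eq_prod {M : Type*} [CommMonoid M] (p : L → V) (x : V → L → M) :
    ∏ v, ∏ ℓ ∈ univ.filter fun ℓ => p ℓ = v, x v ℓ = ∏ ℓ, x (p ℓ) ℓ := by
  rw [← prod_fiberwise univ p fun ℓ => x (p ℓ) ℓ]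
  refine prod_congr rfl fun v _ => prod_congr rfl fun ℓ hℓ => ?_
  rw [(mem_filter.1 hℓ).2]

section

variable {Γ : Type*} [CommGroup Γ]

lemma Wline_smul (χ : L → (Γ →* ℂˣ)) (c : ℂ) (f : (L → Γ) → ℂ) :
    Wline χ (c • f) = c • Wline χ f := by
  funext a
  exact smul_comm _ c (f a)

lemma Wline_mul (χ ψ : L → (Γ →* ℂˣ)) (f : (L → Γ) → ℂ) :
    Wline (χ * ψ) f = Wline χ (Wline ψ f) := by
  funext a
  simp only [Wline, Pi.mul_apply, MonoidHom.mul_apply, prod_mul_distrib, mul_inv, Units.val_mul,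
    smul_eq_mul, mul_assoc]

lemma Wline_one (f : (L → Γ) → ℂ) : Wline (1 : L → (Γ →* ℂˣ)) f = f := by
  funext a
  simp [Wline]

lemma Wline_Wline_inv (χ : L → (Γ →* ℂˣ)) (f : (L → Γ) → ℂ) :
    Wline χ (Wline χ⁻¹ f) = f := by
  rw [← Wline_mul, (mul_inv_cancel χ : χ * χ⁻¹ = 1), Wline_one]

lemma Wline_inv_Wline (χ : L → (Γ →* ℂˣ)) (f : (L → Γ) → ℂ) :
    Wline χ⁻¹ (Wline χ f) = f := by
  rw [← Wline_mul, (inv_mul_cancel χ : χ⁻¹ * χ = 1), Wline_one]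

lemma prod_gaussMap_apply (s t : L → V) (χ : L → (Γ →* ℂˣ)) (g : V → Γ) :
    ∏ v, gaussMap s t χ v (g v) = (∏ ℓ, χ ℓ (g (s ℓ))) * (∏ ℓ, χ ℓ (g (t ℓ)))⁻¹ := by
  simp only [gaussMap, MonoidHom.mul_apply, MonoidHom.finsetProd_apply, MonoidHom.inv_apply,
    prod_mul_distrib, prod_inv_distrib]
  rw [prod_fiberwise_filter_eq_prod s fun v ℓ => χ ℓ (g v),
    prod_fiberwise_filter_eq_prod t fun v ℓ => χ ℓ (g v)]

lemma gaussMap_inv {V : Type*} [DecidableEq V] (s t : L → V) (χ : L → (Γ →* ℂˣ)) :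
    gaussMap s t χ⁻¹ = (gaussMap s t χ)⁻¹ := by
  funext v
  ext x
  simp [gaussMap, MonoidHom.finsetProd_apply, prod_inv_distrib, mul_comm]

lemma Ugauge_Wline (s t : L → V) (g : V → Γ) (χ : L → (Γ →* ℂˣ)) (f : (L → Γ) → ℂ) :
    Ugauge s t g (Wline χ f)
      = (((∏ v, gaussMap s t χ v (g v)) : ℂˣ) : ℂ) • Wline χ (Ugauge s t g f) := by
  funext a
  have hχ : (∏ ℓ, χ ℓ ((g (s ℓ))⁻¹ * a ℓ * g (t ℓ)))⁻¹
      = (∏ v, gaussMap s t χ v (g v)) * (∏ ℓ, χ ℓ (a ℓ))⁻¹ := by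
    simp only [prod_gaussMap_apply, map_mul, map_inv, prod_mul_distrib, prod_inv_distrib, mul_inv,
      inv_inv]
    ac_rfl
  simp only [Ugauge, Wline, Pi.smul_apply, smul_smul, hχ, Units.val_mul]

lemma Wline_mapsTo_chargeSector (s t : L → V) (χ : L → (Γ →* ℂˣ)) (q : V → (Γ →* ℂˣ)) :
    Set.MapsTo (Wline χ) (chargeSector s t q) (chargeSector s t (q * gaussMap s t χ)) := by
  intro f hf g
  rw [Ugauge_Wline, hf g, Wline_smul, smul_smul, ← Units.val_mul, mul_comm]
  simp only [Pi.mul_apply, MonoidHom.mul_apply, prod_mul_distrib]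

end

/-- A Wilson line operator `W^χ` maps the charge sector `H_q` bijectively onto the charge
sector `H_{q · ∂χ}`: dressing frame fields are isometries between charge sectors. -/
theorem wilson_bijOn_chargeSectors (s t : L → V) (χ : L → (G →* ℂˣ))
    (q : V → (G →* ℂˣ)) :
    Set.BijOn (Wline χ) (chargeSector s t q)
      (chargeSector s t (q * gaussMap s t χ)) := by
  have hback := Wline_mapsTo_chargeSector s t χ⁻¹ (q * gaussMap s t χ)
  rw [gaussMap_inv, (mul_inv_cancel_right q _ : q * gaussMap s t χ * (gaussMap s t χ)⁻¹ = q)]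
    at hback
  exact Set.InvOn.bijOn ⟨fun f _ => Wline_inv_Wline χ f, fun f _ => Wline_Wline_inv χ f⟩
    (Wline_mapsTo_chargeSector s t χ q) hback
end

section
/- (Particle–antiparticle number relation, Eq. (3.53) of the paper.) For every natural number D ≥ 2, the truncated particle and antiparticle number operators satisfy a† * a + ā† * ā = D • (1 − E_{0,0}) in Matrix (Fin D) (Fin D) ℂ, where 1 denotes the identity matrix; equivalently, the sum of the particle and antiparticle occupation numbers equals 0 on the vacuum level and D on every other level. -/
open Finset Matrix

/-- The truncated annihilation operator `a = ∑_{m=0}^{D-2} √(m+1) • E_{m, m+1}` on `ℂ^D`. -/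
noncomputable def annOp (D : ℕ) : Matrix (Fin D) (Fin D) ℂ :=
  ∑ m : Fin (D - 1),
    (Real.sqrt ((m : ℕ) + 1) : ℂ) •
      Matrix.single (⟨(m : ℕ), by have h := m.2; omega⟩ : Fin D)
        ⟨(m : ℕ) + 1, by have h := m.2; omega⟩ 1

/-- The antiparticle annihilation operator
`ā = ∑_{m=1}^{D-1} √(D−m) • E_{(m+1) mod D, m}` on `ℂ^D`. -/
noncomputable def antiAnnOp (D : ℕ) : Matrix (Fin D) (Fin D) ℂ :=
  ∑ m ∈ (Finset.Icc 1 (D - 1)).attach,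
    (Real.sqrt ((D : ℝ) - (m : ℕ)) : ℂ) •
      Matrix.single
        (⟨((m : ℕ) + 1) % D,
          Nat.mod_lt _ (by have h := Finset.mem_Icc.mp m.2; omega)⟩ : Fin D)
        ⟨(m : ℕ), by have h := Finset.mem_Icc.mp m.2; omega⟩ 1

lemma annOp_apply (D : ℕ) (i j : Fin D) :
    annOp D i j = if (i:ℕ)+1 = (j:ℕ) then ((Real.sqrt ((i:ℕ)+1) : ℝ) : ℂ) else 0 := by
  unfold annOp
  simp only [Matrix.sum_apply, Matrix.smul_apply, Matrix.single, Matrix.of_apply,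
    smul_eq_mul, mul_ite, mul_one, mul_zero, Fin.ext_iff]
  by_cases h : (i:ℕ)+1 = (j:ℕ)
  · have hi : (i:ℕ) < D - 1 := by have := j.2; omega
    rw [Finset.sum_eq_single (⟨(i:ℕ), hi⟩ : Fin (D-1))]
    · simp [h]
    · intro b _ hb
      simp only [ite_eq_right_iff]
      rintro ⟨hb1, -⟩
      exact absurd (Fin.ext hb1) hb
    · simp
  · rw [if_neg h]
    apply Finset.sum_eq_zero
    intro b _
    simp only [ite_eq_right_iff]
    rintro ⟨h1, h2⟩
    omega

lemma antiAnnOp_apply (D : ℕ) (i j : Fin D) :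
    antiAnnOp D i j = if 1 ≤ (j:ℕ) ∧ (i:ℕ) = ((j:ℕ)+1) % D then
      ((Real.sqrt ((D:ℝ) - (j:ℕ)) : ℝ) : ℂ) else 0 := by
  unfold antiAnnOp
  simp only [Matrix.sum_apply, Matrix.smul_apply, Matrix.single, Matrix.of_apply,
    smul_eq_mul, mul_ite, mul_one, mul_zero, Fin.ext_iff]
  by_cases h : 1 ≤ (j:ℕ) ∧ (i:ℕ) = ((j:ℕ)+1) % D
  · have hj : (j:ℕ) ∈ Finset.Icc 1 (D-1) := by
      refine Finset.mem_Icc.mpr ⟨h.1, ?_⟩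
      have := j.2; omega
    rw [Finset.sum_eq_single (⟨(j:ℕ), hj⟩ : {x // x ∈ Finset.Icc 1 (D-1)})]
    · simp [h.2, h.1]
    · intro b _ hb
      simp only [ite_eq_right_iff]
      rintro ⟨-, hb2⟩
      exact absurd (Subtype.ext hb2) hb
    · simp
  · rw [if_neg h]
    apply Finset.sum_eq_zero
    intro b _
    simp only [ite_eq_right_iff]
    rintro ⟨h1, h2⟩
    exact absurd ⟨by have := (Finset.mem_Icc.mp b.2).1; omega, by rw [← h2, h1]⟩ h

lemma mul_ann (D : ℕ) (i j : Fin D) :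
    ((annOp D)ᴴ * annOp D) i j = if (i:ℕ) = (j:ℕ) then ((i:ℕ):ℂ) else 0 := by
  rw [Matrix.mul_apply]
  simp only [Matrix.conjTranspose_apply, annOp_apply, apply_ite (star : ℂ → ℂ), star_zero,
    Complex.star_def, Complex.conj_ofReal, ite_mul, zero_mul, mul_ite, mul_zero]
  by_cases hij : (i:ℕ) = (j:ℕ)
  · rw [if_pos hij]
    by_cases hi : 1 ≤ (i:ℕ)
    · have hk : (i:ℕ)-1 < D := by have := i.2; omega
      rw [Finset.sum_eq_single (⟨(i:ℕ)-1, hk⟩ : Fin D)]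
      · have e1 : ((⟨(i:ℕ)-1, hk⟩ : Fin D) : ℕ) + 1 = (i:ℕ) := by simp; omega
        rw [if_pos e1, if_pos (by omega), ← Complex.ofReal_mul,
          Real.mul_self_sqrt (by positivity)]
        norm_cast
      · intro b _ hb
        rw [if_neg]
        intro hb1
        exact hb (Fin.ext (by simp; omega))
      · simp
    · have hi0 : (i:ℕ) = 0 := by omega
      rw [hi0]
      simp only [Nat.cast_zero]
      apply Finset.sum_eq_zero
      intro b _
      rw [if_neg (by omega)]
  · rw [if_neg hij]
    apply Finset.sum_eq_zero
    intro b _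
    by_cases hb1 : (b:ℕ)+1 = (i:ℕ)
    · simp [hb1, hij]
    · simp [hb1]

lemma mul_anti (D : ℕ) (i j : Fin D) :
    ((antiAnnOp D)ᴴ * antiAnnOp D) i j =
      if (i:ℕ) = (j:ℕ) ∧ 1 ≤ (i:ℕ) then ((D:ℂ) - ((i:ℕ):ℂ)) else 0 := by
  have modinj : ∀ x y : ℕ, 1 ≤ x → x < D → 1 ≤ y → y < D → (x+1)%D = (y+1)%D → x = y := by
    intro x y hx hxD hy hyD h
    have ex : (x+1)%D = if x+1=D then 0 else x+1 := by
      split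
      · simp [*]
      · exact Nat.mod_eq_of_lt (by omega)
    have ey : (y+1)%D = if y+1=D then 0 else y+1 := by
      split
      · simp [*]
      · exact Nat.mod_eq_of_lt (by omega)
    rw [ex, ey] at h
    split_ifs at h <;> omega
  rw [Matrix.mul_apply]
  simp only [Matrix.conjTranspose_apply, antiAnnOp_apply, apply_ite (star : ℂ → ℂ), star_zero,
    Complex.star_def, Complex.conj_ofReal, ite_mul, zero_mul, mul_ite, mul_zero]
  by_cases hij : (i:ℕ) = (j:ℕ) ∧ 1 ≤ (i:ℕ)
  · rw [if_pos hij]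
    have hD : 0 < D := by have := i.2; omega
    rw [Finset.sum_eq_single (⟨((i:ℕ)+1) % D, Nat.mod_lt _ hD⟩ : Fin D)]
    · rw [if_pos ⟨by omega, by simp [hij.1]⟩, if_pos ⟨hij.2, rfl⟩, ← Complex.ofReal_mul,
        ← hij.1, Real.mul_self_sqrt (sub_nonneg.mpr (by exact_mod_cast i.2.le))]
      push_cast
      ring
    · intro b _ hb
      rw [if_neg]
      rintro ⟨-, hb2⟩
      exact hb (Fin.ext (by rw [hb2, hij.1]))
    · simp
  · rw [if_neg hij]
    apply Finset.sum_eq_zero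
    intro b _
    by_cases hb1 : 1 ≤ (j:ℕ) ∧ (b:ℕ) = ((j:ℕ)+1) % D
    · rw [if_pos hb1, if_neg]
      rintro ⟨hi1, hb2⟩
      have := modinj _ _ hi1 i.2 hb1.1 j.2 (by rw [← hb2, ← hb1.2])
      exact hij ⟨this, hi1⟩
    · simp [hb1]


/-- Particle–antiparticle number relation (Eq. (3.53)): for `D ≥ 2`,
`a† a + ā† ā = D • (1 − E_{0,0})`. -/
theorem particle_antiparticle_number_relation (D : ℕ) (hD : 2 ≤ D) :
    (annOp D)ᴴ * annOp D + (antiAnnOp D)ᴴ * antiAnnOp D =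
      (D : ℂ) • ((1 : Matrix (Fin D) (Fin D) ℂ) -
        Matrix.single (⟨0, by omega⟩ : Fin D) ⟨0, by omega⟩ 1) := by
  ext i j
  rw [Matrix.add_apply, mul_ann, mul_anti]
  simp only [Matrix.smul_apply, Matrix.sub_apply, Matrix.one_apply, Matrix.single,
    Matrix.of_apply, smul_eq_mul, Fin.ext_iff]
  split_ifs
  all_goals try (exfalso; omega)
  all_goals try ring
  all_goals (obtain ⟨h0, -⟩ := ‹0 = (i:ℕ) ∧ 0 = (j:ℕ)›; rw [← h0]; simp)
end
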